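/- arXiv:math/0512520 — 2 statements merged into one kernel-verified Lean document; each statement's English description precedes it below -/
import Mathlib

section
/- Let z ∈ k[X] be nonzero with d(z) = 0 and e(z) = w·z for a natural number w. Then d̂^w(z) ≠ 0 and d̂^{w+1}(z) = 0; that is, the order of z equals its weight: ord(z) = ω(z). -/
/-!
`weitz`, `dhat` and `ee` form an `sl₂`-triple (raising, lowering and Cartan element), so `z` is a
primitive vector of weight `w`, and `d (d̂^(j+1) z) = (j+1)(w-j) d̂^j z`. By induction this gives
`d̂^j z ≠ 0` for `j ≤ w`. Since `d̂` sends `x_i` to a multiple of `x_(i+1)`, it strictly lowers the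
weighted degree with weights `n - i`, hence is locally nilpotent; at the last `j` with
`d̂^j z ≠ 0` the identity forces `j = w`.
-/

open MvPolynomial Finset

/-- The Weitzenböck derivation `d` on `k[x_0,…,x_n]`: `d(x_i) = x_{i-1}` for
`1 ≤ i ≤ n` and `d(x_0) = 0`. -/
noncomputable def weitz (k : Type*) [Field k] [CharZero k] (n : ℕ) :
    Derivation k (MvPolynomial (Fin (n + 1)) k) (MvPolynomial (Fin (n + 1)) k) :=
  mkDerivation k (fun i : Fin (n + 1) =>
    if _ : (i : ℕ) = 0 then 0
    else X (⟨(i : ℕ) - 1, by have := i.isLt; omega⟩ : Fin (n + 1)))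

/-- The derivation `d̂` on `k[x_0,…,x_n]`: `d̂(x_i) = (i+1)(n−i)·x_{i+1}` for
`0 ≤ i ≤ n−1` and `d̂(x_n) = 0`. -/
noncomputable def dhat (k : Type*) [Field k] [CharZero k] (n : ℕ) :
    Derivation k (MvPolynomial (Fin (n + 1)) k) (MvPolynomial (Fin (n + 1)) k) :=
  mkDerivation k (fun i : Fin (n + 1) =>
    if h : (i : ℕ) = n then 0
    else ((((i : ℕ) + 1) * (n - (i : ℕ)) : ℕ) : k) •
      X (⟨(i : ℕ) + 1, by have := i.isLt; omega⟩ : Fin (n + 1)))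

/-- The derivation `e` on `k[x_0,…,x_n]`: `e(x_i) = (n−2i)·x_i`. -/
noncomputable def ee (k : Type*) [Field k] [CharZero k] (n : ℕ) :
    Derivation k (MvPolynomial (Fin (n + 1)) k) (MvPolynomial (Fin (n + 1)) k) :=
  mkDerivation k (fun i : Fin (n + 1) => ((n : ℤ) - 2 * (i : ℕ)) • X i)

namespace IsSl2Triple.HasPrimitiveVectorWith

open LieModule

variable {R L M : Type*} [CommRing R] [IsDomain R] [CharZero R] [LieRing L] [LieAlgebra R L]
  [AddCommGroup M] [Module R M] [Module.IsTorsionFree R M] [LieRingModule L M] [LieModule R L M]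
  {h e f : L} {t : IsSl2Triple h e f} {m : M} {μ : R}

/-- `pow_toEnd_f_eq_zero_of_eq_nat` with local nilpotency of `f` at `m` in place of a Noetherian
module. -/
lemma pow_toEnd_f_eq_zero_of_eq_nat_of_exists (P : t.HasPrimitiveVectorWith m μ)
    (hf : ∃ j, (toEnd R L M f ^ j) m = 0) {n : ℕ} (hn : μ = n) :
    (toEnd R L M f ^ (n + 1)) m = 0 := by
  obtain ⟨j, hj, hj_succ⟩ := Nat.exists_not_and_succ_of_not_zero_of_exists P.ne_zero hf
  have hμ := P.lie_e_pow_succ_toEnd_f j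
  rw [hj_succ, lie_zero, eq_comm, smul_eq_zero_iff_left hj, mul_eq_zero, sub_eq_zero, hn,
    Nat.cast_inj] at hμ
  obtain rfl := hμ.resolve_left (Nat.cast_add_one_ne_zero j)
  exact hj_succ

end IsSl2Triple.HasPrimitiveVectorWith

lemma Derivation.toEnd_pow_apply {R A : Type*} [CommRing R] [CommRing A] [Algebra R A]
    (D : Derivation R A A) (j : ℕ) (a : A) :
    (LieModule.toEnd R (Derivation R A A) A D ^ j) a = (⇑D)^[j] a := by
  rw [Module.End.pow_apply]
  rfl

namespace MvPolynomial

variable (R : Type*) {σ : Type*} [CommSemiring R] (φ : σ → ℕ)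

noncomputable def weightedDegreeLT (m : ℕ) : Submodule R (MvPolynomial σ R) :=
  restrictSupport R {τ | τ.weight φ < m}

variable {R φ}

@[simp] lemma weightedDegreeLT_zero : weightedDegreeLT R φ 0 = ⊥ := by
  ext p
  simp [weightedDegreeLT, mem_restrictSupport_iff, Set.subset_def, ← support_eq_empty,
    Finset.eq_empty_iff_forall_notMem]

lemma weightedDegreeLT_mono : Monotone (weightedDegreeLT R φ) :=
  fun _ _ h => restrictSupport_mono R fun _ hτ => lt_of_lt_of_le hτ h

lemma exists_mem_weightedDegreeLT (p : MvPolynomial σ R) :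
    ∃ m, p ∈ weightedDegreeLT R φ m :=
  ⟨p.support.sup (Finsupp.weight φ) + 1, fun _ hτ => Nat.lt_succ_of_le (Finset.le_sup hτ)⟩

lemma monomial_mul_mem_weightedDegreeLT {m : ℕ} {q : MvPolynomial σ R}
    (hq : q ∈ weightedDegreeLT R φ m) (μ : σ →₀ ℕ) (c : R) :
    monomial μ c * q ∈ weightedDegreeLT R φ (μ.weight φ + m) := by
  have hμ : monomial μ c ∈ restrictSupport R {μ} := by simp [monomial_mem_restrictSupport]
  have hμq := Submodule.mul_mem_mul hμ hq
  rw [weightedDegreeLT, ← restrictSupport_add R] at hμq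
  refine restrictSupport_mono R ?_ hμq
  rintro _ ⟨_, rfl, τ, hτ, rfl⟩
  simpa using hτ

variable {D : Derivation R (MvPolynomial σ R) (MvPolynomial σ R)}

lemma derivation_monomial_mem_weightedDegreeLT
    (hD : ∀ i, D (X i) ∈ weightedDegreeLT R φ (φ i)) (τ : σ →₀ ℕ) (c : R) :
    D (monomial τ c) ∈ weightedDegreeLT R φ (τ.weight φ) := by
  rw [← derivation_ext (D₁ := mkDerivation R fun i => D (X i)) (D₂ := D) (by simp),
    mkDerivation_monomial]
  refine Submodule.smul_mem _ _ (Submodule.sum_mem _ fun i hi => ?_)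
  rw [← Finsupp.weight_sub_single_add (Finsupp.mem_support_iff.mp hi)]
  exact monomial_mul_mem_weightedDegreeLT (hD i) _ _

lemma derivation_mem_weightedDegreeLT (hD : ∀ i, D (X i) ∈ weightedDegreeLT R φ (φ i)) {m : ℕ}
    {p : MvPolynomial σ R} (hp : p ∈ weightedDegreeLT R φ (m + 1)) :
    D p ∈ weightedDegreeLT R φ m := by
  suffices weightedDegreeLT R φ (m + 1) ≤ (weightedDegreeLT R φ m).comap D.toLinearMap from this hp
  rw [weightedDegreeLT, restrictSupport_eq_span, Submodule.span_le]
  rintro _ ⟨τ, hτ, rfl⟩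
  exact weightedDegreeLT_mono (Nat.lt_succ_iff.mp hτ)
    (derivation_monomial_mem_weightedDegreeLT hD τ 1)

lemma exists_iterate_derivation_eq_zero (hD : ∀ i, D (X i) ∈ weightedDegreeLT R φ (φ i))
    (p : MvPolynomial σ R) : ∃ j, (⇑D)^[j] p = 0 := by
  obtain ⟨m, hm⟩ := exists_mem_weightedDegreeLT (φ := φ) p
  refine ⟨m, ?_⟩
  induction m generalizing p with
  | zero => simpa using hm
  | succ m ih => exact ih _ (derivation_mem_weightedDegreeLT hD hm)

end MvPolynomial

section Weitzenbock

variable {k : Type*} [Field k] [CharZero k] {n : ℕ}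

@[simp] lemma weitz_X_zero : weitz k n (X 0) = 0 := by
  simp [weitz]

lemma weitz_X_succ (i : Fin n) : weitz k n (X i.succ) = X i.castSucc := by
  rw [weitz, mkDerivation_X, dif_neg (by simp)]
  rfl

@[simp] lemma dhat_X_last : dhat k n (X (Fin.last n)) = 0 := by
  simp [dhat]

lemma dhat_X_castSucc (i : Fin n) :
    dhat k n (X i.castSucc) = (((i : ℕ) + 1 : k) * (n - (i : ℕ))) • X i.succ := by
  rw [dhat, mkDerivation_X, dif_neg (by simpa using i.isLt.ne)]
  congr 1
  push_cast [Fin.val_castSucc, Nat.cast_sub i.isLt.le]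
  rfl

lemma ee_X (i : Fin (n + 1)) : ee k n (X i) = ((n : k) - 2 * (i : ℕ)) • X i := by
  simp [ee, ← Int.cast_smul_eq_zsmul k]

lemma lie_ee_weitz : ⁅ee k n, weitz k n⁆ = 2 • weitz k n := by
  refine derivation_ext fun i => ?_
  rw [Derivation.commutator_apply, ee_X, Derivation.map_smul, Derivation.smul_apply]
  cases i using Fin.cases with
  | zero => simp
  | succ i =>
    rw [weitz_X_succ, ee_X]
    simp only [Fin.val_succ, Fin.val_castSucc, Nat.cast_add, Nat.cast_one]
    module

lemma lie_ee_dhat : ⁅ee k n, dhat k n⁆ = -(2 • dhat k n) := by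
  refine derivation_ext fun i => ?_
  rw [Derivation.commutator_apply, ee_X, Derivation.map_smul, Derivation.neg_apply,
    Derivation.smul_apply]
  cases i using Fin.lastCases with
  | last => simp
  | cast i =>
    rw [dhat_X_castSucc, Derivation.map_smul, ee_X]
    simp only [Fin.val_succ, Fin.val_castSucc, Nat.cast_add, Nat.cast_one]
    module

lemma lie_weitz_dhat : ⁅weitz k n, dhat k n⁆ = ee k n := by
  refine derivation_ext fun i => ?_
  rw [Derivation.commutator_apply, ee_X]
  cases i using Fin.lastCases with
  | last =>
    rw [dhat_X_last, map_zero, zero_sub]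
    cases n with
    | zero => simp
    | succ n =>
      rw [← Fin.succ_last, weitz_X_succ, dhat_X_castSucc, Fin.succ_last]
      simp only [Fin.val_last, Nat.cast_add, Nat.cast_one]
      module
  | cast i =>
    rw [dhat_X_castSucc, Derivation.map_smul, weitz_X_succ]
    obtain ⟨n, rfl⟩ : ∃ m, n = m + 1 := Nat.exists_eq_add_one_of_ne_zero i.pos.ne'
    cases i using Fin.cases with
    | zero => simp
    | succ i =>
      rw [← Fin.succ_castSucc, weitz_X_succ, dhat_X_castSucc, Fin.succ_castSucc]
      simp only [Fin.val_succ, Fin.val_castSucc, Nat.cast_add, Nat.cast_one]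
      module

lemma isSl2Triple_ee_weitz_dhat (hn : n ≠ 0) : IsSl2Triple (ee k n) (weitz k n) (dhat k n) where
  h_ne_zero h := by simpa [ee_X, hn, X_ne_zero] using congr($h (X 0))
  lie_e_f := lie_weitz_dhat
  lie_h_e_nsmul := lie_ee_weitz
  lie_h_f_nsmul := lie_ee_dhat

lemma ee_zero : ee k 0 = 0 :=
  derivation_ext fun i => by simp [ee_X, Fin.fin_one_eq_zero i]

lemma dhat_zero : dhat k 0 = 0 :=
  derivation_ext fun i => by simpa [Fin.fin_one_eq_zero i] using dhat_X_last (k := k) (n := 0)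

lemma dhat_X_mem_weightedDegreeLT (i : Fin (n + 1)) :
    dhat k n (X i) ∈ weightedDegreeLT k (fun j : Fin (n + 1) => n - j) (n - i) := by
  cases i using Fin.lastCases with
  | last => simp
  | cast i =>
    rw [dhat_X_castSucc]
    refine Submodule.smul_mem _ _ ((monomial_mem_restrictSupport k).mpr (Or.inl ?_))
    simp only [Finsupp.weight_single, Fin.val_succ, Fin.val_castSucc, smul_eq_mul, one_mul,
      Set.mem_ofPred_eq]
    omega

lemma exists_iterate_dhat_eq_zero (p : MvPolynomial (Fin (n + 1)) k) :
    ∃ j, (⇑(dhat k n))^[j] p = 0 :=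
  exists_iterate_derivation_eq_zero dhat_X_mem_weightedDegreeLT p

end Weitzenbock

/-- For a nonzero `z` with `d(z) = 0` and `e(z) = w·z` (`w ∈ ℕ`),
the order of `z` equals its weight: `d̂^w(z) ≠ 0` and `d̂^{w+1}(z) = 0`. -/
theorem ord_eq_weight (k : Type*) [Field k] [CharZero k] (n : ℕ)
    (z : MvPolynomial (Fin (n + 1)) k) (hz0 : z ≠ 0) (w : ℕ)
    (hd : weitz k n z = 0) (he : ee k n z = (w : k) • z) :
    (⇑(dhat k n))^[w] z ≠ 0 ∧ (⇑(dhat k n))^[w + 1] z = 0 := by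
  rcases eq_or_ne n 0 with rfl | hn
  -- `ee k 0 = 0`, so for `n = 0` there is no `sl₂`-triple.
  · obtain rfl : w = 0 := by simpa [ee_zero, hz0, eq_comm] using he
    simp [hz0, dhat_zero]
  have P : (isSl2Triple_ee_weitz_dhat (k := k) hn).HasPrimitiveVectorWith z (w : k) :=
    ⟨hz0, he, hd⟩
  have hnil : ∃ j, (LieModule.toEnd k _ _ (dhat k n) ^ j) z = 0 := by
    simpa only [Derivation.toEnd_pow_apply] using exists_iterate_dhat_eq_zero z
  rw [← Derivation.toEnd_pow_apply, ← Derivation.toEnd_pow_apply]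
  exact ⟨P.pow_toEnd_f_ne_zero_of_eq_nat rfl le_rfl,
    P.pow_toEnd_f_eq_zero_of_eq_nat_of_exists hnil rfl⟩
end

section
/- Let u, v ∈ k[X] be nonzero polynomials with d(u) = d(v) = 0, with d̂(u) = 0 (so u is an e-eigenvector of eigenvalue 0), and with e(v) = w·v for a natural number w. Then for every integer i with 0 ≤ i ≤ min(n, w) one has τ_i(u·v) = u·τ_i(v); in particular τ_i(u·v) is reducible. -/
open MvPolynomial Finset

/-- The Casimir element `τ_i(z) = Σ_{k=0}^{i} (−1)^k ((w−k)!/(k!·w!)) x_{i−k} d̂^k(z)`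
associated to a kernel element `z` of weight `w`, for `i ≤ n`. -/
noncomputable def tau (k : Type*) [Field k] [CharZero k] (n w i : ℕ) (hi : i ≤ n)
    (z : MvPolynomial (Fin (n + 1)) k) : MvPolynomial (Fin (n + 1)) k :=
  ∑ j ∈ Finset.range (i + 1),
    ((-1 : k) ^ j * ((w - j).factorial : k) / ((j.factorial * w.factorial : ℕ) : k)) •
      (X (⟨i - j, by omega⟩ : Fin (n + 1)) * (⇑(dhat k n))^[j] z)

/-- If `u` is a kernel element with `d̂(u) = 0` (a weight-zero
element) and `v` is a kernel element of weight `w`, then for `0 ≤ i ≤ min(n, w)`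
one has `τ_i(u·v) = u·τ_i(v)`, so `τ_i(u·v)` is reducible. -/
theorem tau_mul_order_zero (k : Type*) [Field k] [CharZero k] (n : ℕ)
    (u v : MvPolynomial (Fin (n + 1)) k) (hu0 : u ≠ 0) (hv0 : v ≠ 0)
    (hdu : weitz k n u = 0) (hdv : weitz k n v = 0)
    (hdhatu : dhat k n u = 0) (w : ℕ) (hev : ee k n v = (w : k) • v)
    (i : ℕ) (hin : i ≤ n) (hiw : i ≤ w) :
    tau k n w i hin (u * v) = u * tau k n w i hin v := by
  have key : ∀ j : ℕ, (⇑(dhat k n))^[j] (u * v) = u * (⇑(dhat k n))^[j] v := by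
    intro j
    induction j with
    | zero => simp
    | succ m ih =>
      rw [Function.iterate_succ_apply', ih, Derivation.leibniz, hdhatu,
        Function.iterate_succ_apply']
      simp [mul_comm]
  unfold tau
  rw [Finset.mul_sum]
  refine Finset.sum_congr rfl fun j _ => ?_
  rw [key j, mul_smul_comm]
  ring_nf
end
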